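/- Let d be a prime, let P : (ZMod d)² → ℝ satisfy P(a,b) ≥ 0 for all (a,b), and let Y₁, Y₂ be unitary d×d complex matrices. Then: (1) for every (k,l) ∈ (ZMod d)², Σ_{(a,b) ∈ (ZMod d)²} P(a,b) · | d^{−1} Tr( W_{k,l}† · Y₁† · W_{a,b} · Y₂ ) |² ≤ max_{(a,b) ∈ (ZMod d)²} P(a,b); and (2) the bound is attained by the identity (canonic) choice: for every (a₀,b₀) ∈ (ZMod d)², Σ_{(a,b) ∈ (ZMod d)²} P(a,b) · | d^{−1} Tr( W_{a₀,b₀}† · W_{a,b} ) |² = P(a₀,b₀). -/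

import Mathlib

/-!
The Weyl operators are orthogonal for the Hilbert–Schmidt pairing:
`tr (W_{k,l}ᴴ W_{a,b}) = d` if `(a, b) = (k, l)` and `0` otherwise, which gives (2).
For (1), cycling the trace writes the coefficients as `d⁻¹ tr (W_{a,b} U)` with
`U = Y₂ W_{k,l}ᴴ Y₁ᴴ` unitary. For fixed `b`, `a ↦ tr (W_{a,b} U)` is the discrete Fourier transform
of the `b`-th diagonal `j ↦ U (j + b) j`, so Parseval shows that the squared coefficients sum to
`d⁻² · d · ∑ |U i j|² = 1`; the left side of (1) is then a weighted average of `P`.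
-/

open Matrix Complex

noncomputable section

/-- ω = exp(2πi/d). -/
def omga (d : ℕ) : ℂ := Complex.exp (2 * Real.pi * Complex.I / d)

/-- The Weyl operator W_{k,l}: (j,j') entry is ω^{jk} if j' = j + l, else 0. -/
def weyl (d : ℕ) (k l : ZMod d) : Matrix (ZMod d) (ZMod d) ℂ :=
  Matrix.of fun j j' => if j' = j + l then omga d ^ (j * k).val else 0

open ZMod ComplexConjugate

section Fourier

variable {N : ℕ} [NeZero N]

theorem sum_stdAddChar_mul (b : ZMod N) :
    ∑ a, stdAddChar (a * b) = if b = 0 then (N : ℂ) else 0 := by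
  rw [AddChar.sum_mulShift b (isPrimitive_stdAddChar N), ZMod.card, apply_ite Nat.cast,
    Nat.cast_zero]

theorem sum_norm_sq_sum_stdAddChar_mul (f : ZMod N → ℂ) :
    ∑ a, ‖∑ j, stdAddChar (j * a) * f j‖ ^ 2 = N * ∑ j, ‖f j‖ ^ 2 := by
  apply Complex.ofReal_injective
  push_cast
  simp_rw [← Complex.mul_conj', map_sum, map_mul, ← AddChar.map_neg_eq_conj, Finset.sum_mul_sum,
    Finset.mul_sum]
  rw [Finset.sum_comm]
  refine Finset.sum_congr rfl fun j _ => ?_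
  rw [Finset.sum_comm]
  have orthogonality (j' : ZMod N) :
      ∑ a, stdAddChar (j * a) * f j * (stdAddChar (-(j' * a)) * conj (f j')) =
        (if j - j' = 0 then (N : ℂ) else 0) * (f j * conj (f j')) := by
    rw [← sum_stdAddChar_mul, Finset.sum_mul]
    refine Finset.sum_congr rfl fun a _ => ?_
    rw [mul_comm a, sub_mul, sub_eq_add_neg, AddChar.map_add_eq_mul]
    ring
  simp_rw [orthogonality, sub_eq_zero, ite_mul, zero_mul, Finset.sum_ite_eq, Finset.mem_univ,
    if_true]

end Fourier

theorem sum_norm_sq_apply_of_mem_unitaryGroup {n : Type*} [Fintype n] [DecidableEq n]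
    {U : Matrix n n ℂ} (hU : U ∈ unitaryGroup n ℂ) :
    ∑ i, ∑ j, ‖U i j‖ ^ 2 = Fintype.card n := by
  apply Complex.ofReal_injective
  have := congrArg trace (mem_unitaryGroup_iff.mp hU)
  simp only [trace, diag_apply, mul_apply, star_apply] at this
  push_cast
  simpa [← Complex.mul_conj'] using this

section Weyl

variable {d : ℕ} [NeZero d]

theorem omga_pow_val (m : ZMod d) : omga d ^ m.val = stdAddChar m := by
  rw [omga, ← Complex.exp_nat_mul, stdAddChar_apply, toCircle_apply]
  ring_nf

theorem weyl_apply (k l j j' : ZMod d) :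
    weyl d k l j j' = if j' = j + l then stdAddChar (j * k) else 0 := by
  simp [weyl, omga_pow_val]

theorem weyl_mem_unitaryGroup (k l : ZMod d) : weyl d k l ∈ unitaryGroup (ZMod d) ℂ := by
  rw [mem_unitaryGroup_iff]
  ext i i'
  by_cases h : i = i' <;> simp [mul_apply, weyl_apply, one_apply, h, ← AddChar.map_neg_eq_conj,
    ← AddChar.map_add_eq_mul]

theorem trace_weyl_mul (a b : ZMod d) (X : Matrix (ZMod d) (ZMod d) ℂ) :
    (weyl d a b * X).trace = ∑ j, stdAddChar (j * a) * X (j + b) j := by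
  simp [trace, mul_apply, weyl_apply]

theorem trace_conjTranspose_weyl_mul_weyl (k l a b : ZMod d) :
    ((weyl d k l)ᴴ * weyl d a b).trace = if (a, b) = (k, l) then (d : ℂ) else 0 := by
  rw [trace_mul_comm, trace_weyl_mul]
  by_cases hb : b = l
  · simp only [hb, conjTranspose_apply, weyl_apply, if_pos, RCLike.star_def,
      ← AddChar.map_neg_eq_conj, ← AddChar.map_add_eq_mul, Prod.mk.injEq, and_true]
    simp_rw [← sub_eq_add_neg, ← mul_sub, sum_stdAddChar_mul, sub_eq_zero]
  · simp [hb, weyl_apply]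

theorem sum_norm_sq_trace_weyl_mul (X : Matrix (ZMod d) (ZMod d) ℂ) :
    ∑ ab : ZMod d × ZMod d, ‖(weyl d ab.1 ab.2 * X).trace‖ ^ 2 = d * ∑ i, ∑ j, ‖X i j‖ ^ 2 := by
  simp_rw [trace_weyl_mul, Fintype.sum_prod_type]
  rw [Finset.sum_comm]
  simp_rw [sum_norm_sq_sum_stdAddChar_mul, ← Finset.mul_sum]
  rw [Finset.sum_comm, Finset.sum_comm (f := fun i j => ‖X i j‖ ^ 2)]
  congr 1
  refine Finset.sum_congr rfl fun j _ => ?_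
  exact Fintype.sum_equiv (Equiv.addLeft j) _ _ fun _ => rfl

theorem sum_norm_sq_inv_mul_trace_weyl_mul_of_mem_unitaryGroup {U : Matrix (ZMod d) (ZMod d) ℂ}
    (hU : U ∈ unitaryGroup (ZMod d) ℂ) :
    ∑ ab : ZMod d × ZMod d, ‖(1 / (d : ℂ)) * (weyl d ab.1 ab.2 * U).trace‖ ^ 2 = 1 := by
  have hd : (d : ℝ) ≠ 0 := NeZero.ne _
  simp_rw [norm_mul, mul_pow, ← Finset.mul_sum, sum_norm_sq_trace_weyl_mul,
    sum_norm_sq_apply_of_mem_unitaryGroup hU, ZMod.card]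
  field_simp
  simp

end Weyl

theorem sum_mul_le_sup'_of_sum_eq_one {ι : Type*} [Fintype ι] [Nonempty ι] (P c : ι → ℝ)
    (hc : ∀ i, 0 ≤ c i) (hc_sum : ∑ i, c i = 1) :
    ∑ i, P i * c i ≤ Finset.univ.sup' Finset.univ_nonempty P :=
  calc ∑ i, P i * c i ≤ ∑ i, Finset.univ.sup' Finset.univ_nonempty P * c i :=
        Finset.sum_le_sum fun i _ =>
          mul_le_mul_of_nonneg_right (Finset.le_sup' P (Finset.mem_univ i)) (hc i)
    _ = Finset.univ.sup' Finset.univ_nonempty P := by rw [← Finset.mul_sum, hc_sum, mul_one]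

theorem weighted_coefficients_max_general
    (d : ℕ) [NeZero d]
    (P : ZMod d × ZMod d → ℝ)
    (Y₁ Y₂ : Matrix (ZMod d) (ZMod d) ℂ)
    (hY₁ : Y₁ ∈ Matrix.unitaryGroup (ZMod d) ℂ)
    (hY₂ : Y₂ ∈ Matrix.unitaryGroup (ZMod d) ℂ) :
    (∀ k l : ZMod d,
      ∑ ab : ZMod d × ZMod d,
        P ab * ‖(1 / (d : ℂ)) * ((weyl d k l)ᴴ * Y₁ᴴ * weyl d ab.1 ab.2 * Y₂).trace‖ ^ 2 ≤
      Finset.univ.sup' Finset.univ_nonempty P) ∧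
    (∀ a₀ b₀ : ZMod d,
      ∑ ab : ZMod d × ZMod d,
        P ab * ‖(1 / (d : ℂ)) * ((weyl d a₀ b₀)ᴴ * weyl d ab.1 ab.2).trace‖ ^ 2 =
      P (a₀, b₀)) := by
  refine ⟨fun k l => ?_, fun a₀ b₀ => ?_⟩
  · have hU : Y₂ * (weyl d k l)ᴴ * Y₁ᴴ ∈ unitaryGroup (ZMod d) ℂ := by
      simp_rw [← star_eq_conjTranspose]
      exact mul_mem (mul_mem hY₂ (Unitary.star_mem (weyl_mem_unitaryGroup k l)))
        (Unitary.star_mem hY₁)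
    have cyclic (ab : ZMod d × ZMod d) : ((weyl d k l)ᴴ * Y₁ᴴ * weyl d ab.1 ab.2 * Y₂).trace =
        (weyl d ab.1 ab.2 * (Y₂ * (weyl d k l)ᴴ * Y₁ᴴ)).trace := by
      rw [trace_mul_comm, ← Matrix.mul_assoc, ← Matrix.mul_assoc, trace_mul_comm]
    simp_rw [cyclic]
    exact sum_mul_le_sup'_of_sum_eq_one _ _ (fun _ => sq_nonneg _)
      (sum_norm_sq_inv_mul_trace_weyl_mul_of_mem_unitaryGroup hU)
  · have hd : (d : ℂ) ≠ 0 := NeZero.ne _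
    rw [Fintype.sum_eq_single (a₀, b₀) fun ab hab => by
      simp [trace_conjTranspose_weyl_mul_weyl, hab]]
    simp [trace_conjTranspose_weyl_mul_weyl, hd]

/-- (1) for any nonnegative weights P and unitaries Y₁, Y₂, the weighted sum of
squared coefficients is bounded by the maximal weight; (2) the bound is attained by the
identity (canonic) choice. -/
theorem weighted_coefficients_max
    (d : ℕ) [NeZero d] (hd : d.Prime)
    (P : ZMod d × ZMod d → ℝ) (hP : ∀ ab, 0 ≤ P ab)
    (Y₁ Y₂ : Matrix (ZMod d) (ZMod d) ℂ)
    (hY₁ : Y₁ ∈ Matrix.unitaryGroup (ZMod d) ℂ)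
    (hY₂ : Y₂ ∈ Matrix.unitaryGroup (ZMod d) ℂ) :
    (∀ k l : ZMod d,
      ∑ ab : ZMod d × ZMod d,
        P ab * ‖(1 / (d : ℂ)) * ((weyl d k l)ᴴ * Y₁ᴴ * weyl d ab.1 ab.2 * Y₂).trace‖ ^ 2 ≤
      Finset.univ.sup' Finset.univ_nonempty P) ∧
    (∀ a₀ b₀ : ZMod d,
      ∑ ab : ZMod d × ZMod d,
        P ab * ‖(1 / (d : ℂ)) * ((weyl d a₀ b₀)ᴴ * weyl d ab.1 ab.2).trace‖ ^ 2 =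
      P (a₀, b₀)) :=
  weighted_coefficients_max_general d P Y₁ Y₂ hY₁ hY₂
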